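/- Let a > 0 and b₁ ≤ b₂ be real numbers, and define lᵢ(n) = logit(1 − Φ(a√n + bᵢ)) for n > 0 and i = 1, 2. Then l₂(n) ≤ l₁(n) for all n > 0, and lim_{n→∞} (l₁(n) − l₂(n))/√n = a·(b₂ − b₁). -/

import Mathlib

open Filter MeasureTheory Set

/-- Standard normal CDF. -/
noncomputable def Phi (x : ℝ) : ℝ :=
  ∫ t in Set.Iio x, (Real.sqrt (2 * Real.pi))⁻¹ * Real.exp (-t ^ 2 / 2)

/-- Standard normal density. -/
noncomputable def stdPdf (x : ℝ) : ℝ := (Real.sqrt (2 * Real.pi))⁻¹ * Real.exp (-x ^ 2 / 2)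

/-- Standard normal quantile function. -/
noncomputable def PhiInv : ℝ → ℝ := Function.invFun Phi

/-- Logit function. -/
noncomputable def logit (x : ℝ) : ℝ := Real.log x - Real.log (1 - x)

/-!
Mills' ratio bounds `x φ(x) / (x² + 1) ≤ 1 - Φ(x) ≤ φ(x) / x` for `x > 0` come from integrating
the derivatives of `-φ(t)` and `-φ(t) / t` over `(x, ∞)`. They give
`log (1 - Φ(x)) = -x² / 2 - log x - log √(2π) + o(1)`, and since `log Φ(x) → 0`,
`logit (1 - Φ(x)) = -x² / 2 + o(x)`. At `xᵢ = a s + bᵢ` the quadratic terms differ by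
`(x₂² - x₁²) / 2 = a (b₂ - b₁) s + O(1)`, which gives the limit after substituting `s = √n`.
The inequality holds because `Φ` is increasing and `logit` is increasing on `(0, 1)`.
-/

open Real Topology Asymptotics ProbabilityTheory

lemma stdPdf_eq_gaussianPDFReal : stdPdf = gaussianPDFReal 0 1 := by
  ext x
  simp [stdPdf, gaussianPDFReal]

lemma stdPdf_pos (x : ℝ) : 0 < stdPdf x := by
  rw [stdPdf_eq_gaussianPDFReal]
  exact gaussianPDFReal_pos _ _ _ one_ne_zero

lemma integrable_stdPdf : Integrable stdPdf :=
  stdPdf_eq_gaussianPDFReal ▸ integrable_gaussianPDFReal 0 1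

lemma one_sub_Phi_eq_integral_Ioi (x : ℝ) : 1 - Phi x = ∫ t in Ioi x, stdPdf t := by
  have hsplit := intervalIntegral.integral_Iic_add_Ioi (b := x)
    integrable_stdPdf.integrableOn integrable_stdPdf.integrableOn
  have hPhi : Phi x = ∫ t in Iic x, stdPdf t := setIntegral_congr_set Iio_ae_eq_Iic
  rw [stdPdf_eq_gaussianPDFReal, integral_gaussianPDFReal_eq_one 0 one_ne_zero] at hsplit
  rw [hPhi, ← hsplit, stdPdf_eq_gaussianPDFReal, add_sub_cancel_left]

lemma setIntegral_stdPdf_pos {s : Set ℝ} (hs : volume s ≠ 0) : 0 < ∫ t in s, stdPdf t := by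
  rw [setIntegral_pos_iff_support_of_nonneg_ae
    (ae_of_all _ fun t => (stdPdf_pos t).le) integrable_stdPdf.integrableOn,
    Function.support_eq_univ fun t => (stdPdf_pos t).ne', univ_inter]
  exact pos_iff_ne_zero.2 hs

lemma Phi_pos (x : ℝ) : 0 < Phi x :=
  setIntegral_stdPdf_pos (by simp)

lemma Phi_lt_one (x : ℝ) : Phi x < 1 := by
  have := setIntegral_stdPdf_pos (s := Ioi x) (by simp)
  linarith [one_sub_Phi_eq_integral_Ioi x]

lemma monotone_Phi : Monotone Phi := fun _ _ hxy =>
  setIntegral_mono_set integrable_stdPdf.integrableOn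
    (ae_of_all _ fun t => (stdPdf_pos t).le) (Iio_subset_Iio hxy).eventuallyLE

lemma monotoneOn_logit : MonotoneOn logit (Ioo 0 1) := by
  intro x hx y hy hxy
  unfold logit
  gcongr
  · exact hx.1
  · linarith [hy.2]

lemma antitone_logit_one_sub_Phi : Antitone fun x => logit (1 - Phi x) := fun x y hxy =>
  monotoneOn_logit ⟨by linarith [Phi_lt_one y], by linarith [Phi_pos y]⟩
    ⟨by linarith [Phi_lt_one x], by linarith [Phi_pos x]⟩ (by linarith [monotone_Phi hxy])

lemma hasDerivAt_stdPdf (x : ℝ) : HasDerivAt stdPdf (-x * stdPdf x) x := by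
  have h : HasDerivAt (fun t => (√(2 * π))⁻¹ * exp (-t ^ 2 / 2)) _ x :=
    (((hasDerivAt_pow 2 x).neg.div_const 2).exp).const_mul _
  exact h.congr_deriv (by simp only [stdPdf, Pi.neg_apply]; push_cast; ring)

lemma tendsto_stdPdf_atTop : Tendsto stdPdf atTop (𝓝 0) := by
  have hexp : Tendsto (fun x : ℝ => exp (-x ^ 2 / 2)) atTop (𝓝 0) :=
    tendsto_exp_atBot.comp <| tendsto_neg_atTop_atBot.comp
      ((tendsto_pow_atTop two_ne_zero).atTop_div_const two_pos) |>.congr fun x => by simp [neg_div]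
  have h := hexp.const_mul (√(2 * π))⁻¹
  rwa [mul_zero] at h

lemma tendsto_stdPdf_div_atTop : Tendsto (fun x => stdPdf x / x) atTop (𝓝 0) := by
  simpa only [mul_zero, div_eq_mul_inv] using tendsto_stdPdf_atTop.mul tendsto_inv_atTop_zero

lemma integrableOn_and_integral_Ioi_mul_stdPdf {x : ℝ} (hx : 0 < x) :
    IntegrableOn (fun t => t * stdPdf t) (Ioi x) ∧ ∫ t in Ioi x, t * stdPdf t = stdPdf x := by
  have hderiv : ∀ t ∈ Ici x, HasDerivAt (fun t => -stdPdf t) (t * stdPdf t) t := fun t _ =>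
    (hasDerivAt_stdPdf t).neg.congr_deriv (by ring)
  have hnonneg : ∀ t ∈ Ioi x, 0 ≤ t * stdPdf t := fun t ht =>
    mul_nonneg (hx.trans ht).le (stdPdf_pos t).le
  have hlim : Tendsto (fun t => -stdPdf t) atTop (𝓝 0) := by simpa using tendsto_stdPdf_atTop.neg
  refine ⟨integrableOn_Ioi_deriv_of_nonneg' hderiv hnonneg hlim, ?_⟩
  simpa using integral_Ioi_of_hasDerivAt_of_nonneg' hderiv hnonneg hlim

lemma integral_Ioi_stdPdf_mul_one_add_inv_sq {x : ℝ} (hx : 0 < x) :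
    ∫ t in Ioi x, stdPdf t * (1 + (t ^ 2)⁻¹) = stdPdf x / x := by
  have hderiv : ∀ t ∈ Ici x, HasDerivAt (fun t => -(stdPdf t / t)) (stdPdf t * (1 + (t ^ 2)⁻¹)) t :=
    fun t ht => by
      have ht0 : t ≠ 0 := (hx.trans_le ht).ne'
      refine ((hasDerivAt_stdPdf t).div (hasDerivAt_id t) ht0).neg.congr_deriv ?_
      simp only [id]
      field_simp
      ring
  have hnonneg : ∀ t ∈ Ioi x, 0 ≤ stdPdf t * (1 + (t ^ 2)⁻¹) := fun t _ =>
    mul_nonneg (stdPdf_pos t).le (by positivity)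
  have hlim : Tendsto (fun t => -(stdPdf t / t)) atTop (𝓝 0) := by
    simpa using tendsto_stdPdf_div_atTop.neg
  simpa using integral_Ioi_of_hasDerivAt_of_nonneg' hderiv hnonneg hlim

lemma one_sub_Phi_le {x : ℝ} (hx : 0 < x) : 1 - Phi x ≤ stdPdf x / x := by
  obtain ⟨hint, hval⟩ := integrableOn_and_integral_Ioi_mul_stdPdf hx
  calc 1 - Phi x = ∫ t in Ioi x, stdPdf t := one_sub_Phi_eq_integral_Ioi x
    _ ≤ ∫ t in Ioi x, x⁻¹ * (t * stdPdf t) := by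
      refine setIntegral_mono_on integrable_stdPdf.integrableOn (hint.const_mul _)
        measurableSet_Ioi fun t ht => ?_
      rw [← mul_assoc, inv_mul_eq_div]
      exact le_mul_of_one_le_left (stdPdf_pos t).le ((one_le_div hx).2 (le_of_lt ht))
    _ = stdPdf x / x := by rw [integral_const_mul, hval, inv_mul_eq_div]

lemma le_one_sub_Phi {x : ℝ} (hx : 0 < x) : x * stdPdf x / (x ^ 2 + 1) ≤ 1 - Phi x := by
  calc x * stdPdf x / (x ^ 2 + 1)
        = ∫ t in Ioi x, x ^ 2 / (x ^ 2 + 1) * (stdPdf t * (1 + (t ^ 2)⁻¹)) := by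
        rw [integral_const_mul, integral_Ioi_stdPdf_mul_one_add_inv_sq hx]
        field_simp
    _ ≤ ∫ t in Ioi x, stdPdf t := by
      refine integral_mono_of_nonneg (ae_restrict_of_forall_mem measurableSet_Ioi fun t _ => ?_)
        integrable_stdPdf.integrableOn (ae_restrict_of_forall_mem measurableSet_Ioi fun t ht => ?_)
      · have := stdPdf_pos t
        positivity
      have hxt : (t ^ 2)⁻¹ ≤ (x ^ 2)⁻¹ := by gcongr; exact le_of_lt ht
      have hcoef : x ^ 2 / (x ^ 2 + 1) * (1 + (t ^ 2)⁻¹) ≤ 1 := by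
        calc x ^ 2 / (x ^ 2 + 1) * (1 + (t ^ 2)⁻¹) ≤ x ^ 2 / (x ^ 2 + 1) * (1 + (x ^ 2)⁻¹) := by
              gcongr
          _ = 1 := by field_simp
      calc x ^ 2 / (x ^ 2 + 1) * (stdPdf t * (1 + (t ^ 2)⁻¹))
          = x ^ 2 / (x ^ 2 + 1) * (1 + (t ^ 2)⁻¹) * stdPdf t := by ring
        _ ≤ stdPdf t := mul_le_of_le_one_left (stdPdf_pos t).le hcoef
    _ = 1 - Phi x := (one_sub_Phi_eq_integral_Ioi x).symm

lemma tendsto_Phi_atTop : Tendsto Phi atTop (𝓝 1) := by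
  have hlow : Tendsto (fun x => 1 - stdPdf x / x) atTop (𝓝 1) := by
    simpa using tendsto_stdPdf_div_atTop.const_sub 1
  refine tendsto_of_tendsto_of_tendsto_of_le_of_le' hlow tendsto_const_nhds ?_
    (Eventually.of_forall fun x => (Phi_lt_one x).le)
  filter_upwards [eventually_gt_atTop 0] with x hx
  linarith [one_sub_Phi_le hx]

lemma log_stdPdf (x : ℝ) : log (stdPdf x) = -log √(2 * π) - x ^ 2 / 2 := by
  rw [stdPdf, log_mul (by positivity) (exp_ne_zero _), log_exp, log_inv]
  ring

lemma tendsto_log_one_sub_Phi_add_sq_add_log :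
    Tendsto (fun x => log (1 - Phi x) + x ^ 2 / 2 + log x) atTop (𝓝 (-log √(2 * π))) := by
  have hlow : Tendsto (fun x : ℝ => -log √(2 * π) - log (1 + (x ^ 2)⁻¹)) atTop
      (𝓝 (-log √(2 * π))) := by
    have h := ((tendsto_inv_atTop_zero.comp (tendsto_pow_atTop two_ne_zero)).const_add 1).log
      (by norm_num)
    simpa using h.const_sub (-log √(2 * π))
  refine tendsto_of_tendsto_of_tendsto_of_le_of_le' hlow tendsto_const_nhds ?_ ?_
  · filter_upwards [eventually_gt_atTop 0] with x hx
    have h := log_le_log (by have := stdPdf_pos x; positivity) (le_one_sub_Phi hx)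
    rw [log_div (by have := stdPdf_pos x; positivity) (by positivity),
      log_mul hx.ne' (stdPdf_pos x).ne', log_stdPdf] at h
    have hsplit : log (x ^ 2 + 1) = 2 * log x + log (1 + (x ^ 2)⁻¹) := by
      rw [show x ^ 2 + 1 = x ^ 2 * (1 + (x ^ 2)⁻¹) by field_simp,
        log_mul (by positivity) (by positivity), log_pow]
      push_cast
      ring
    linarith
  · filter_upwards [eventually_gt_atTop 0] with x hx
    have h := log_le_log (by linarith [Phi_lt_one x]) (one_sub_Phi_le hx)
    rw [log_div (stdPdf_pos x).ne' hx.ne', log_stdPdf] at h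
    linarith

lemma logit_one_sub (x : ℝ) : logit (1 - x) = log (1 - x) - log x := by
  rw [logit, sub_sub_cancel]

lemma tendsto_logit_one_sub_Phi_add_sq_add_log :
    Tendsto (fun x => logit (1 - Phi x) + x ^ 2 / 2 + log x) atTop (𝓝 (-log √(2 * π))) := by
  have hlogPhi : Tendsto (fun x => log (Phi x)) atTop (𝓝 0) := by
    simpa using tendsto_Phi_atTop.log one_ne_zero
  convert tendsto_log_one_sub_Phi_add_sq_add_log.sub hlogPhi using 2 with x
  · rw [logit_one_sub]
    ring
  · simp

lemma isLittleO_logit_one_sub_Phi_add_sq :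
    (fun x => logit (1 - Phi x) + x ^ 2 / 2) =o[atTop] id := by
  have h := (tendsto_logit_one_sub_Phi_add_sq_add_log.isBigO_one ℝ).trans_isLittleO
    (isLittleO_const_id_atTop (1 : ℝ)) |>.sub isLittleO_log_id_atTop
  simpa using h

lemma tendsto_sub_comp_affine_div {g : ℝ → ℝ} (hg : (fun x => g x + x ^ 2 / 2) =o[atTop] id)
    {a : ℝ} (ha : 0 < a) (b₁ b₂ : ℝ) :
    Tendsto (fun s => (g (a * s + b₁) - g (a * s + b₂)) / s) atTop (𝓝 (a * (b₂ - b₁))) := by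
  have herr : ∀ b, Tendsto (fun s => (g (a * s + b) + (a * s + b) ^ 2 / 2) / s) atTop (𝓝 0) := by
    intro b
    have hto : Tendsto (fun s => a * s + b) atTop atTop :=
      tendsto_atTop_add_const_right _ b (tendsto_id.const_mul_atTop ha)
    have hbig : (fun s => a * s + b) =O[atTop] id :=
      ((isBigO_refl id atTop).const_mul_left a).add (isLittleO_const_id_atTop b).isBigO
    exact ((hg.comp_tendsto hto).trans_isBigO hbig).tendsto_div_nhds_zero
  have hmain : Tendsto (fun s => a * (b₂ - b₁) + (b₂ ^ 2 - b₁ ^ 2) / 2 * s⁻¹) atTop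
      (𝓝 (a * (b₂ - b₁))) := by
    simpa using (tendsto_inv_atTop_zero.const_mul ((b₂ ^ 2 - b₁ ^ 2) / 2)).const_add (a * (b₂ - b₁))
  have h := ((herr b₁).sub (herr b₂)).add hmain
  rw [sub_zero, zero_add] at h
  refine h.congr' ?_
  filter_upwards [eventually_ne_atTop 0] with s hs
  field_simp
  ring

theorem stmt17 (a b1 b2 : ℝ) (ha : 0 < a) (hb : b1 ≤ b2) :
    (∀ n : ℝ, 0 < n →
      logit (1 - Phi (a * Real.sqrt n + b2)) ≤ logit (1 - Phi (a * Real.sqrt n + b1))) ∧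
    Filter.Tendsto
      (fun n : ℝ =>
        (logit (1 - Phi (a * Real.sqrt n + b1)) - logit (1 - Phi (a * Real.sqrt n + b2)))
          / Real.sqrt n)
      Filter.atTop (nhds (a * (b2 - b1))) :=
  ⟨fun _ _ => antitone_logit_one_sub_Phi (by linarith),
    (tendsto_sub_comp_affine_div isLittleO_logit_one_sub_Phi_add_sq ha b1 b2).comp
      tendsto_sqrt_atTop⟩
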